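/- arXiv:2102.07479 — 2 statements merged into one kernel-verified Lean document; each statement's English description precedes it below -/
import Mathlib

section
/- Let ρ be a density matrix on ℂⁿ and let σ be a positive definite density matrix on ℂⁿ. Then S_meas(ρ|σ) ≥ −2 log Tr |ρ^{1/2} σ^{1/2}|, i.e. the measured relative entropy is bounded below by minus the logarithm of the squared fidelity F(ρ|σ) = Tr|ρ^{1/2} σ^{1/2}|. -/
open Matrix Complex
open scoped ComplexOrder

/-- Complex power `A^z` of a Hermitian matrix `A`, via the spectral functional
calculus (junk value `0` if `A` is not Hermitian); for eigenvalue `0` and `Re z > 0`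
this uses `(0 : ℂ) ^ z = 0`. -/
noncomputable def mcpow {n : ℕ} (A : Matrix (Fin n) (Fin n) ℂ) (z : ℂ) :
    Matrix (Fin n) (Fin n) ℂ :=
  if hA : A.IsHermitian then
    (hA.eigenvectorUnitary : Matrix (Fin n) (Fin n) ℂ) *
      Matrix.diagonal (fun i => (hA.eigenvalues i : ℂ) ^ z) *
      (hA.eigenvectorUnitary : Matrix (Fin n) (Fin n) ℂ)ᴴ
  else 0

/-- `Tr |M|`, where `|M| = (M* M)^{1/2}`. -/
noncomputable def trAbs {n : ℕ} (M : Matrix (Fin n) (Fin n) ℂ) : ℝ :=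
  ((mcpow (Mᴴ * M) ((1 / 2 : ℝ) : ℂ)).trace).re

/-- The measured relative entropy
`S_meas(ρ|ω) = sup { Tr(ρh) − log Tr(ω e^h) : h Hermitian }`, as an extended real. -/
noncomputable def Smeas {n : ℕ} (ρ ω : Matrix (Fin n) (Fin n) ℂ) : EReal :=
  ⨆ h : {h : Matrix (Fin n) (Fin n) ℂ // h.IsHermitian},
    (((((ρ * h.1).trace).re - Real.log (((ω * NormedSpace.exp h.1).trace).re)
      : ℝ)) : EReal)

/-!
Let `A = σ^{-1/2} |ρ^{1/2} σ^{1/2}| σ^{-1/2}`, the geometric mean of `σ⁻¹` and `ρ`: it is positive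
semidefinite, `A σ A = ρ` and `Tr (σ A) = F(ρ|σ)`. Measuring in an eigenbasis of `A`, with
eigenvalues `λᵢ`, turns `σ` and `ρ` into probability vectors `qᵢ` and `pᵢ = λᵢ² qᵢ`, so that
`∑ᵢ √(pᵢ qᵢ) = ∑ᵢ λᵢ qᵢ = F(ρ|σ)`. Restricting the variational formula for `S_meas` to
observables diagonal in that basis bounds it below by the classical relative entropy `D(p‖q)`,
and `D(p‖q) ≥ -2 log ∑ᵢ √(pᵢ qᵢ)` by concavity of the logarithm (weighted AM-GM).
-/

open Finset Filter Topology

section Classical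
variable {ι : Type*} [Fintype ι] {p q : ι → ℝ}

theorem neg_two_mul_log_sum_sqrt_le_sum_mul_log_div (hp : ∀ i, 0 ≤ p i) (hq : ∀ i, 0 < q i)
    (hp1 : ∑ i, p i = 1) :
    -2 * Real.log (∑ i, √(p i * q i)) ≤ ∑ i, p i * Real.log (p i / q i) := by
  set z : ι → ℝ := fun i => √(q i / p i)
  have hz_pow_pos : ∀ i, 0 < z i ^ p i := fun i => by
    rcases (hp i).eq_or_lt with h0 | hpos
    · simp [← h0]
    · exact Real.rpow_pos_of_pos (Real.sqrt_pos.2 (div_pos (hq i) hpos)) _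
  have hamgm : ∏ i, z i ^ p i ≤ ∑ i, √(p i * q i) := by
    refine (Real.geom_mean_le_arith_mean_weighted univ p z (fun i _ => hp i) hp1
      (fun i _ => Real.sqrt_nonneg _)).trans_eq (sum_congr rfl fun i _ => ?_)
    rcases (hp i).eq_or_lt with h0 | hpos
    · simp [← h0]
    · calc p i * z i = √(p i ^ 2 * (q i / p i)) := by
            rw [Real.sqrt_mul (sq_nonneg _), Real.sqrt_sq (hp i)]
        _ = √(p i * q i) := by congr 1; field_simp
  have hlog : Real.log (∏ i, z i ^ p i) = -(1 / 2) * ∑ i, p i * Real.log (p i / q i) := by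
    rw [Real.log_prod fun i _ => (hz_pow_pos i).ne', mul_sum]
    refine sum_congr rfl fun i _ => ?_
    rcases (hp i).eq_or_lt with h0 | hpos
    · simp [← h0]
    · have hqp : 0 < q i / p i := div_pos (hq i) hpos
      rw [Real.log_rpow (Real.sqrt_pos.2 hqp), Real.log_sqrt hqp.le,
        Real.log_div (hq i).ne' hpos.ne', Real.log_div hpos.ne' (hq i).ne']
      ring
  have := Real.log_le_log (prod_pos fun i _ => hz_pow_pos i) hamgm
  linarith

theorem sum_mul_log_div_le_iSup_sum_mul_sub_log_sum_mul_exp (hp : ∀ i, 0 ≤ p i)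
    (hq : ∀ i, 0 < q i) (hp1 : ∑ i, p i = 1) :
    ((∑ i, p i * Real.log (p i / q i) : ℝ) : EReal) ≤
      ⨆ c : ι → ℝ, ((∑ i, p i * c i - Real.log (∑ i, q i * Real.exp (c i)) : ℝ) : EReal) := by
  -- the maximiser `log (p / q)` is pushed to `-∞` off the support of `p`
  set c : ℝ → ι → ℝ := fun t i => if p i = 0 then -t else Real.log (p i / q i)
  have hlin : ∀ t, ∑ i, p i * c t i = ∑ i, p i * Real.log (p i / q i) := fun t =>
    sum_congr rfl fun i _ => by by_cases h : p i = 0 <;> simp [c, h]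
  have hexp : Tendsto (fun t => ∑ i, q i * Real.exp (c t i)) atTop (𝓝 1) := by
    rw [← hp1]
    refine tendsto_finsetSum _ fun i _ => ?_
    by_cases h : p i = 0
    · simpa [c, h] using (Real.tendsto_exp_neg_atTop_nhds_zero.const_mul (q i))
    · simp only [c, h, if_false]
      rw [Real.exp_log (div_pos ((hp i).lt_of_ne' h) (hq i)), mul_div_cancel₀ _ (hq i).ne']
      exact tendsto_const_nhds
  have hlim : Tendsto
      (fun t => ((∑ i, p i * c t i - Real.log (∑ i, q i * Real.exp (c t i)) : ℝ) : EReal))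
      atTop (𝓝 ((∑ i, p i * Real.log (p i / q i) : ℝ) : EReal)) := by
    simp_rw [hlin]
    refine continuous_coe_real_ereal.continuousAt.tendsto.comp ?_
    simpa using tendsto_const_nhds.sub (hexp.log one_ne_zero)
  exact le_of_tendsto' hlim fun t => le_iSup_of_le (c t) le_rfl

end Classical

section UnitaryConj
variable {m : Type*} [Fintype m] [DecidableEq m] {U : Matrix m m ℂ}

theorem trace_mul_conj_diagonal (B U : Matrix m m ℂ) (c : m → ℂ) :
    (B * (U * diagonal c * Uᴴ)).trace = ∑ i, (Uᴴ * B * U) i i * c i := by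
  rw [← Matrix.mul_assoc, ← Matrix.mul_assoc, trace_mul_comm, ← Matrix.mul_assoc,
    ← Matrix.mul_assoc]
  simp [Matrix.trace, Matrix.mul_diagonal]

theorem exp_conj_diagonal (hU : U ∈ unitaryGroup m ℂ) (c : m → ℂ) :
    NormedSpace.exp (U * diagonal c * Uᴴ) = U * diagonal (fun i => Complex.exp (c i)) * Uᴴ := by
  have hinv : U⁻¹ = Uᴴ := inv_eq_right_inv (mem_unitaryGroup_iff.1 hU)
  rw [← hinv, Matrix.exp_conj U _ (Unitary.isUnit_coe (U := ⟨U, hU⟩)), Matrix.exp_diagonal,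
    Pi.exp_def, Complex.exp_eq_exp_ℂ]

theorem conj_diagonal_mul_conj_diagonal (hU : U ∈ unitaryGroup m ℂ) (c d : m → ℂ) :
    U * diagonal c * Uᴴ * (U * diagonal d * Uᴴ) = U * diagonal (c * d) * Uᴴ := by
  have hUU : Uᴴ * U = 1 := mem_unitaryGroup_iff'.1 hU
  calc U * diagonal c * Uᴴ * (U * diagonal d * Uᴴ)
      = U * (diagonal c * (Uᴴ * U) * diagonal d) * Uᴴ := by simp only [Matrix.mul_assoc]
    _ = U * diagonal (c * d) * Uᴴ := by rw [hUU, Matrix.mul_one, diagonal_mul_diagonal]; rfl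

theorem Matrix.IsHermitian.conj_diagonal_eigenvalues {A : Matrix m m ℂ} (hA : A.IsHermitian) :
    (hA.eigenvectorUnitary : Matrix m m ℂ) *
      diagonal (fun i => (hA.eigenvalues i : ℂ)) *
      (hA.eigenvectorUnitary : Matrix m m ℂ)ᴴ = A :=
  hA.spectral_theorem.symm

end UnitaryConj

section Mcpow
variable {n : ℕ} {A : Matrix (Fin n) (Fin n) ℂ}

theorem mcpow_ofReal_of_posSemidef (hA : A.PosSemidef) (r : ℝ) :
    mcpow A r = (hA.isHermitian.eigenvectorUnitary : Matrix (Fin n) (Fin n) ℂ) *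
      diagonal (fun i => ((hA.isHermitian.eigenvalues i ^ r : ℝ) : ℂ)) *
      (hA.isHermitian.eigenvectorUnitary : Matrix (Fin n) (Fin n) ℂ)ᴴ := by
  rw [mcpow, dif_pos hA.isHermitian]
  congr 3
  funext i
  exact (ofReal_cpow (hA.eigenvalues_nonneg i) r).symm

theorem posSemidef_mcpow (hA : A.PosSemidef) (r : ℝ) : (mcpow A r).PosSemidef := by
  rw [mcpow_ofReal_of_posSemidef hA]
  refine PosSemidef.mul_mul_conjTranspose_same ?_ _
  simpa using fun i => Real.rpow_nonneg (hA.eigenvalues_nonneg i) r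

theorem mcpow_half_mul_self (hA : A.PosSemidef) :
    mcpow A ((1 / 2 : ℝ) : ℂ) * mcpow A ((1 / 2 : ℝ) : ℂ) = A := by
  rw [mcpow_ofReal_of_posSemidef hA,
    conj_diagonal_mul_conj_diagonal hA.isHermitian.eigenvectorUnitary.2]
  convert hA.isHermitian.conj_diagonal_eigenvalues using 4
  funext i
  rw [Pi.mul_apply, ← ofReal_mul, ← Real.rpow_add' (hA.eigenvalues_nonneg i) (by norm_num)]
  norm_num

end Mcpow

section GeometricMean
variable {n : ℕ} {ρ σ : Matrix (Fin n) (Fin n) ℂ}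

theorem exists_posSemidef_mul_mul_eq_and_re_trace_eq_trAbs (hρ : ρ.PosSemidef)
    (hσ : σ.PosDef) :
    ∃ A : Matrix (Fin n) (Fin n) ℂ, A.PosSemidef ∧ A * σ * A = ρ ∧
      (σ * A).trace.re = trAbs (mcpow ρ ((1 / 2 : ℝ) : ℂ) * mcpow σ ((1 / 2 : ℝ) : ℂ)) := by
  set P := mcpow ρ ((1 / 2 : ℝ) : ℂ)
  set Q := mcpow σ ((1 / 2 : ℝ) : ℂ)
  have hP : P.IsHermitian := (posSemidef_mcpow hρ _).isHermitian
  have hQ : Q.IsHermitian := (posSemidef_mcpow hσ.posSemidef _).isHermitian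
  have hPP : P * P = ρ := mcpow_half_mul_self hρ
  have hQQ : Q * Q = σ := mcpow_half_mul_self hσ.posSemidef
  have hdet : IsUnit Q.det := (isUnit_iff_isUnit_det Q).1 <|
    isUnit_of_mul_isUnit_left (x := Q) (y := Q) (hQQ ▸ hσ.isUnit)
  have hQiQ : Q⁻¹ * Q = 1 := nonsing_inv_mul Q hdet
  have hQQi : Q * Q⁻¹ = 1 := mul_nonsing_inv Q hdet
  have hQρQ : (Q * ρ * Q).PosSemidef := by
    simpa only [hQ.eq] using hρ.conjTranspose_mul_mul_same Q
  set M := mcpow (Q * ρ * Q) ((1 / 2 : ℝ) : ℂ)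
  have hMM : M * M = Q * ρ * Q := mcpow_half_mul_self hQρQ
  refine ⟨Q⁻¹ * M * Q⁻¹, ?_, ?_, ?_⟩
  · simpa only [conjTranspose_nonsing_inv, hQ.eq] using
      (posSemidef_mcpow hQρQ _).conjTranspose_mul_mul_same Q⁻¹
  · calc Q⁻¹ * M * Q⁻¹ * σ * (Q⁻¹ * M * Q⁻¹)
        = Q⁻¹ * M * (Q⁻¹ * Q) * (Q * Q⁻¹) * M * Q⁻¹ := by
          simp only [← hQQ, Matrix.mul_assoc]
      _ = Q⁻¹ * (M * M) * Q⁻¹ := by simp only [hQiQ, hQQi, Matrix.mul_one, Matrix.mul_assoc]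
      _ = Q⁻¹ * Q * ρ * (Q * Q⁻¹) := by simp only [hMM, Matrix.mul_assoc]
      _ = ρ := by rw [hQiQ, hQQi, Matrix.one_mul, Matrix.mul_one]
  · have hT : (P * Q)ᴴ * (P * Q) = Q * ρ * Q := by
      rw [conjTranspose_mul, hQ.eq, hP.eq, Matrix.mul_assoc, ← Matrix.mul_assoc P, hPP,
        Matrix.mul_assoc]
    have hσA : σ * (Q⁻¹ * M * Q⁻¹) = Q * M * Q⁻¹ := by
      calc σ * (Q⁻¹ * M * Q⁻¹) = Q * (Q * Q⁻¹) * M * Q⁻¹ := by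
            simp only [← hQQ, Matrix.mul_assoc]
        _ = Q * M * Q⁻¹ := by rw [hQQi, Matrix.mul_one]
    rw [trAbs, hT, hσA, trace_mul_cycle, hQiQ, Matrix.one_mul]

end GeometricMean

section Measurement
variable {m : Type*} [Fintype m] {U ρ σ : Matrix m m ℂ}

/-- The probability of outcome `i` when `ρ` is measured in the orthonormal basis formed by the
columns of `U`. -/
def outcomeProb (U ρ : Matrix m m ℂ) (i : m) : ℝ := ((Uᴴ * ρ * U) i i).re

theorem outcomeProb_nonneg (hρ : ρ.PosSemidef) (U : Matrix m m ℂ) (i : m) :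
    0 ≤ outcomeProb U ρ i :=
  (Complex.le_def.1 (hρ.conjTranspose_mul_mul_same U).diag_nonneg).1

theorem outcomeProb_pos [DecidableEq m] (hσ : σ.PosDef) (hU : U ∈ unitaryGroup m ℂ) (i : m) :
    0 < outcomeProb U σ i :=
  (Complex.lt_def.1 (hσ.conjTranspose_mul_mul_same
    (mulVec_injective_of_isUnit (Unitary.isUnit_coe (U := ⟨U, hU⟩)))).diag_pos).1

theorem sum_outcomeProb [DecidableEq m] (hU : U ∈ unitaryGroup m ℂ) (ρ : Matrix m m ℂ) :
    ∑ i, outcomeProb U ρ i = ρ.trace.re := by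
  have hUU : U * Uᴴ = 1 := mem_unitaryGroup_iff.1 hU
  have h : (Uᴴ * ρ * U).trace = ρ.trace := by rw [trace_mul_cycle, hUU, Matrix.one_mul]
  simpa only [outcomeProb, Matrix.trace, diag_apply, re_sum] using congrArg re h

theorem sum_sqrt_outcomeProb_eigenvectorUnitary [DecidableEq m] {A : Matrix m m ℂ}
    (hA : A.PosSemidef) (hσ : σ.PosSemidef) (h : A * σ * A = ρ) :
    ∑ i, √(outcomeProb hA.isHermitian.eigenvectorUnitary ρ i *
      outcomeProb hA.isHermitian.eigenvectorUnitary σ i) = (σ * A).trace.re := by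
  set U : Matrix m m ℂ := ↑hA.isHermitian.eigenvectorUnitary
  set d := hA.isHermitian.eigenvalues
  have hUU : U * Uᴴ = 1 := mem_unitaryGroup_iff.1 hA.isHermitian.eigenvectorUnitary.2
  have hUAU : Uᴴ * A * U = diagonal (fun i => (d i : ℂ)) :=
    (Unitary.conjStarAlgAut_star_apply _ _).symm.trans
      hA.isHermitian.conjStarAlgAut_star_eigenvectorUnitary
  have hUρU : Uᴴ * ρ * U = (Uᴴ * A * U) * (Uᴴ * σ * U) * (Uᴴ * A * U) := by
    have cancel : ∀ X, U * (Uᴴ * X) = X := fun X => by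
      rw [← Matrix.mul_assoc, hUU, Matrix.one_mul]
    simp only [← h, Matrix.mul_assoc, cancel]
  have hρσ : ∀ i, outcomeProb U ρ i = d i ^ 2 * outcomeProb U σ i := fun i => by
    simp only [outcomeProb, hUρU, hUAU, mul_diagonal, diagonal_mul, re_mul_ofReal,
      re_ofReal_mul]
    ring
  have htr : (σ * A).trace.re = ∑ i, d i * outcomeProb U σ i := by
    conv_lhs => rw [← hA.isHermitian.conj_diagonal_eigenvalues]
    simp only [trace_mul_conj_diagonal, re_sum, re_mul_ofReal]
    exact sum_congr rfl fun i _ => mul_comm _ _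
  rw [htr]
  refine sum_congr rfl fun i _ => ?_
  rw [hρσ, show d i ^ 2 * outcomeProb U σ i * outcomeProb U σ i =
      (d i * outcomeProb U σ i) ^ 2 by ring,
    Real.sqrt_sq (mul_nonneg (hA.eigenvalues_nonneg i) (outcomeProb_nonneg hσ U i))]

end Measurement

theorem sum_mul_log_div_outcomeProb_le_Smeas {n : ℕ} {U ρ σ : Matrix (Fin n) (Fin n) ℂ}
    (hρ : ρ.PosSemidef) (hρtr : ρ.trace = 1) (hσ : σ.PosDef)
    (hU : U ∈ unitaryGroup (Fin n) ℂ) :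
    ((∑ i, outcomeProb U ρ i * Real.log (outcomeProb U ρ i / outcomeProb U σ i) : ℝ) : EReal) ≤
      Smeas ρ σ := by
  refine (sum_mul_log_div_le_iSup_sum_mul_sub_log_sum_mul_exp (outcomeProb_nonneg hρ U)
    (outcomeProb_pos hσ hU) (by rw [sum_outcomeProb hU, hρtr, one_re])).trans
    (iSup_le fun c => ?_)
  set h := U * diagonal (fun i => (c i : ℂ)) * Uᴴ
  have hh : h.IsHermitian := isHermitian_mul_mul_conjTranspose U
    (isHermitian_diagonal_of_self_adjoint _ (by ext i; simp))
  have hρh : (ρ * h).trace.re = ∑ i, outcomeProb U ρ i * c i := by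
    simp only [h, trace_mul_conj_diagonal, re_sum, re_mul_ofReal, outcomeProb]
  have hσh : (σ * NormedSpace.exp h).trace.re = ∑ i, outcomeProb U σ i * Real.exp (c i) := by
    simp only [h, exp_conj_diagonal hU, ← ofReal_exp, trace_mul_conj_diagonal, re_sum,
      re_mul_ofReal, outcomeProb]
  rw [← hρh, ← hσh, Smeas]
  exact le_iSup_of_le (⟨h, hh⟩ : {h : Matrix (Fin n) (Fin n) ℂ // h.IsHermitian}) le_rfl

theorem smeas_ge_neg_log_fidelity_sq_general {n : ℕ} (ρ σ : Matrix (Fin n) (Fin n) ℂ)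
    (hρ : ρ.PosSemidef) (hρtr : ρ.trace = 1)
    (hσ : σ.PosDef) :
    ((- 2 * Real.log (trAbs (mcpow ρ ((1 / 2 : ℝ) : ℂ) * mcpow σ ((1 / 2 : ℝ) : ℂ)))
      : ℝ) : EReal) ≤ Smeas ρ σ := by
  obtain ⟨A, hA, hAσA, hF⟩ := exists_posSemidef_mul_mul_eq_and_re_trace_eq_trAbs hρ hσ
  set U : Matrix (Fin n) (Fin n) ℂ := ↑hA.isHermitian.eigenvectorUnitary
  have hU : U ∈ unitaryGroup (Fin n) ℂ := hA.isHermitian.eigenvectorUnitary.2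
  rw [← hF, ← sum_sqrt_outcomeProb_eigenvectorUnitary hA hσ.posSemidef hAσA]
  calc _ ≤ ((∑ i, outcomeProb U ρ i * Real.log (outcomeProb U ρ i / outcomeProb U σ i) : ℝ)
        : EReal) :=
        EReal.coe_le_coe_iff.2 <| neg_two_mul_log_sum_sqrt_le_sum_mul_log_div
          (outcomeProb_nonneg hρ U) (outcomeProb_pos hσ hU)
          (by rw [sum_outcomeProb hU, hρtr, one_re])
    _ ≤ Smeas ρ σ := sum_mul_log_div_outcomeProb_le_Smeas hρ hρtr hσ hU

/-- **Measured relative entropy ≥ −log of the squared fidelity.** -/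
theorem smeas_ge_neg_log_fidelity_sq {n : ℕ} (ρ σ : Matrix (Fin n) (Fin n) ℂ)
    (hρ : ρ.PosSemidef) (hρtr : ρ.trace = 1)
    (hσ : σ.PosDef) (hσtr : σ.trace = 1) :
    ((- 2 * Real.log (trAbs (mcpow ρ ((1 / 2 : ℝ) : ℂ) * mcpow σ ((1 / 2 : ℝ) : ℂ)))
      : ℝ) : EReal) ≤ Smeas ρ σ :=
  smeas_ge_neg_log_fidelity_sq_general ρ σ hρ hρtr hσ
end

section
/- Let λ > 0 and let A and B be positive definite n×n complex matrices with A ≤ B in the Loewner order. Then (1 + λ A^{−1/2})^{−2} ≤ (1 + λ B^{−1/2})^{−2} in the Loewner order. In other words, the function x ↦ (λ + x^{−1/2})^{−2} is operator monotone on (0,∞). -/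
/-!
Writing `x = a ^ (-1/2)`, the square `(1 + c x) ^ 2 = 1 + 2c a ^ (-1/2) + c² a ^ (-1)` is a
positive combination of the operator antitone maps `a ↦ a ^ (-1/2)` and `a ↦ a ^ (-1)` (each the
inverse composed with a power of exponent in `[0, 1]`, operator monotone by Löwner–Heinz), so it is
operator antitone, and inverting once more makes the whole map operator monotone. Squaring is not
operator monotone, so the expansion cannot be skipped.
-/

open Matrix Complex
open scoped ComplexOrder

namespace CFC

open Set

variable {A : Type*} [CStarAlgebra A] [PartialOrder A] [StarOrderedRing A]

lemma rpow_le_rpow_of_mem_Icc_neg_one_zero {p : ℝ} (hp : p ∈ Icc (-1) 0) {a b : A}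
    (hab : a ≤ b) (ha : IsStrictlyPositive a := by cfc_tac) : b ^ p ≤ a ^ p := by
  have hb : IsStrictlyPositive b := ha.of_le hab
  have inv_rpow : ∀ x : A, IsStrictlyPositive x → (x ^ (-1 : ℝ)) ^ (-p) = x ^ p := fun x hx => by
    rw [rpow_rpow x _ _ (by norm_num), neg_one_mul, neg_neg]
  rw [← inv_rpow a ha, ← inv_rpow b hb]
  exact rpow_le_rpow ⟨by linarith [hp.2], by linarith [hp.1]⟩
    (CStarAlgebra.rpow_neg_one_le_rpow_neg_one hab)

lemma one_add_smul_rpow_neg_half_sq (c : ℝ) {a : A} (ha : IsUnit a) :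
    (1 + c • a ^ (-(1 / 2) : ℝ)) ^ 2 =
      1 + (2 * c) • a ^ (-(1 / 2) : ℝ) + c ^ 2 • a ^ (-1 : ℝ) := by
  have half_add_half : a ^ (-(1 / 2) : ℝ) * a ^ (-(1 / 2) : ℝ) = a ^ (-1 : ℝ) := by
    rw [← rpow_add ha]
    norm_num
  rw [sq, add_mul, mul_add, mul_add, smul_mul_smul_comm, half_add_half]
  simp only [one_mul, mul_one]
  module

lemma ringInverse_sq_one_add_smul_rpow_neg_half_le {c : ℝ} (hc : 0 ≤ c) {a b : A}
    (hab : a ≤ b) (ha : IsStrictlyPositive a) :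
    Ring.inverse ((1 + c • a ^ (-(1 / 2) : ℝ)) ^ 2) ≤
      Ring.inverse ((1 + c • b ^ (-(1 / 2) : ℝ)) ^ 2) := by
  rw [one_add_smul_rpow_neg_half_sq c ha.isUnit,
    one_add_smul_rpow_neg_half_sq c (ha.of_le hab).isUnit]
  have rpow_neg_half_le := rpow_le_rpow_of_mem_Icc_neg_one_zero (p := -(1 / 2))
    ⟨by norm_num, by norm_num⟩ hab
  have rpow_neg_one_le := rpow_le_rpow_of_mem_Icc_neg_one_zero (p := -1)
    ⟨by norm_num, by norm_num⟩ hab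
  have sq_pos : IsStrictlyPositive (1 + (2 * c) • b ^ (-(1 / 2) : ℝ) + c ^ 2 • b ^ (-1 : ℝ)) :=
    (isStrictlyPositive_one.add_nonneg (smul_nonneg (by positivity) rpow_nonneg)).add_nonneg
      (smul_nonneg (by positivity) rpow_nonneg)
  refine CStarAlgebra.ringInverse_le_ringInverse ?_ sq_pos
  gcongr

end CFC

-- With the L2 operator norm, square matrices form a C⋆-algebra, so the lemmas above apply.
open scoped MatrixOrder Matrix.Norms.L2Operator

lemma mcpow_ofReal_eq_rpow {n : ℕ} {A : Matrix (Fin n) (Fin n) ℂ} (hA : A.PosSemidef) (r : ℝ) :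
    mcpow A r = A ^ r := by
  rw [CFC.rpow_eq_cfc_real hA.nonneg, hA.1.cfc_eq, IsHermitian.cfc, mcpow, dif_pos hA.1,
    Unitary.conjStarAlgAut_apply]
  congr 3 with i
  simp [ofReal_cpow (hA.eigenvalues_nonneg i)]

theorem inv_sqrt_resolvent_sq_operator_monotone_general {n : ℕ} (lam : ℝ) (hlam : 0 < lam)
    (A B : Matrix (Fin n) (Fin n) ℂ) (hA : A.PosDef)
    (hAB : (B - A).PosSemidef) :
    ((((1 : Matrix (Fin n) (Fin n) ℂ) + (lam : ℂ) • mcpow B ((-(1 / 2) : ℝ) : ℂ)) ^ 2)⁻¹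
      - (((1 : Matrix (Fin n) (Fin n) ℂ) + (lam : ℂ) • mcpow A ((-(1 / 2) : ℝ) : ℂ)) ^ 2)⁻¹
      ).PosSemidef := by
  have hB : B.PosSemidef := (hA.posSemidef.nonneg.trans hAB).posSemidef
  rw [mcpow_ofReal_eq_rpow hA.posSemidef, mcpow_ofReal_eq_rpow hB, Complex.coe_smul,
    Complex.coe_smul, nonsing_inv_eq_ringInverse, nonsing_inv_eq_ringInverse]
  exact CFC.ringInverse_sq_one_add_smul_rpow_neg_half_le hlam.le hAB hA.isStrictlyPositive

/-- **Operator monotonicity of x ↦ (λ + x^{−1/2})^{−2}.** -/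
theorem inv_sqrt_resolvent_sq_operator_monotone {n : ℕ} (lam : ℝ) (hlam : 0 < lam)
    (A B : Matrix (Fin n) (Fin n) ℂ) (hA : A.PosDef) (hB : B.PosDef)
    (hAB : (B - A).PosSemidef) :
    ((((1 : Matrix (Fin n) (Fin n) ℂ) + (lam : ℂ) • mcpow B ((-(1 / 2) : ℝ) : ℂ)) ^ 2)⁻¹
      - (((1 : Matrix (Fin n) (Fin n) ℂ) + (lam : ℂ) • mcpow A ((-(1 / 2) : ℝ) : ℂ)) ^ 2)⁻¹
      ).PosSemidef :=
  inv_sqrt_resolvent_sq_operator_monotone_general lam hlam A B hA hAB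
end
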